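/- arXiv:0710.1313 — 5 statements merged into one kernel-verified Lean document; each statement's English description precedes it below -/
import Mathlib

section
/- Every semi-free complete semi-vector space is regular: if M is an ℝ≥0-module admitting a semi-basis B, then for all u, v, w ∈ M, u + w = v + w implies u = v (the cancellation law holds in M). -/
open scoped NNReal

/-!
If `0 ∈ B`, uniqueness of representations forces `M` to be trivial. Otherwise
`f ↦ ∑ b, f b • b` is an additive bijection from `B →₀ ℝ≥0` onto `M`, so `M` inherits
cancellation from `ℝ≥0`. Injectivity at nonzero values is the uniqueness clause; at `0`, a
nonzero `f` with sum `0` and any `b` in its support would give two representations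
`b = 1 • b = 1 • b + ∑ f b' • b'`.
-/

/-- A subset `B` of an `ℝ≥0`-module `M` (a complete semi-vector space over `ℝ⁺`)
is a *semi-basis* if every nonzero `m : M` can be written in exactly one way as
`m = ∑ b ∈ t, c b • b` with `t` a nonempty finite subset of `B` and strictly
positive coefficients `c b`. -/
def IsSemiBasis {M : Type*} [AddCommMonoid M] [Module ℝ≥0 M] (B : Set M) : Prop :=
  ∀ m : M, m ≠ 0 →
    (∃ (t : Finset M) (c : M → ℝ≥0),
        t.Nonempty ∧ ↑t ⊆ B ∧ (∀ b ∈ t, 0 < c b) ∧ m = ∑ b ∈ t, c b • b) ∧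
    ∀ (t t' : Finset M) (c c' : M → ℝ≥0),
      t.Nonempty → ↑t ⊆ B → (∀ b ∈ t, 0 < c b) → m = ∑ b ∈ t, c b • b →
      t'.Nonempty → ↑t' ⊆ B → (∀ b ∈ t', 0 < c' b) → m = ∑ b ∈ t', c' b • b →
      t = t' ∧ ∀ b ∈ t, c b = c' b

namespace IsSemiBasis

open Finsupp

variable {M : Type*} [AddCommMonoid M] [Module ℝ≥0 M] {B : Set M}

theorem span_eq_top (hB : IsSemiBasis B) : Submodule.span ℝ≥0 B = ⊤ := by
  refine Submodule.eq_top_iff'.mpr fun m => ?_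
  rcases eq_or_ne m 0 with rfl | hm
  · exact Submodule.zero_mem _
  obtain ⟨t, c, -, htB, -, rfl⟩ := (hB m hm).1
  exact Submodule.sum_mem _ fun b hb => Submodule.smul_mem _ _ (Submodule.subset_span (htB hb))

theorem exists_mem_supported_linearCombination_eq (hB : IsSemiBasis B) (m : M) :
    ∃ f ∈ supported ℝ≥0 ℝ≥0 B, linearCombination ℝ≥0 id f = m := by
  rw [← mem_span_image_iff_linearCombination, Set.image_id, hB.span_eq_top]
  exact Submodule.mem_top

theorem eq_of_linearCombination_eq_of_ne_zero (hB : IsSemiBasis B) {f g : M →₀ ℝ≥0}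
    (hf : f ∈ supported ℝ≥0 ℝ≥0 B) (hg : g ∈ supported ℝ≥0 ℝ≥0 B)
    (hfg : linearCombination ℝ≥0 id f = linearCombination ℝ≥0 id g)
    (hf0 : linearCombination ℝ≥0 id f ≠ 0) : f = g := by
  have hne : ∀ h : M →₀ ℝ≥0, linearCombination ℝ≥0 id h ≠ 0 → h.support.Nonempty :=
    fun h h0 => support_nonempty_iff.mpr (by rintro rfl; exact h0 (map_zero _))
  have hpos : ∀ h : M →₀ ℝ≥0, ∀ b ∈ h.support, 0 < h b :=
    fun h _ hb => pos_iff_ne_zero.mpr (mem_support_iff.mp hb)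
  obtain ⟨hsupp, hcoeff⟩ := (hB _ hf0).2 f.support g.support f g (hne f hf0)
    ((mem_supported _ _).mp hf) (hpos f) (linearCombination_apply _ _)
    (hne g (hfg ▸ hf0)) ((mem_supported _ _).mp hg) (hpos g)
    (hfg.trans (linearCombination_apply _ _))
  refine Finsupp.ext fun b => ?_
  by_cases hb : b ∈ f.support
  · exact hcoeff b hb
  · rw [notMem_support_iff.mp hb, notMem_support_iff.mp (hsupp ▸ hb)]

theorem subsingleton_of_zero_mem (hB : IsSemiBasis B) (h0 : (0 : M) ∈ B) : Subsingleton M := by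
  refine subsingleton_iff.mpr fun x y => ?_
  suffices ∀ m : M, m = 0 from (this x).trans (this y).symm
  intro m
  by_contra hm
  obtain ⟨f, hf, rfl⟩ := hB.exists_mem_supported_linearCombination_eq m
  have hsingle : single (0 : M) (1 : ℝ≥0) ∈ supported ℝ≥0 ℝ≥0 B := single_mem_supported _ _ h0
  have hsum : linearCombination ℝ≥0 id f = linearCombination ℝ≥0 id (f + single 0 1) := by
    rw [map_add, linearCombination_single, id, smul_zero, add_zero]
  have := hB.eq_of_linearCombination_eq_of_ne_zero hf (add_mem hf hsingle) hsum hm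
  exact one_ne_zero (single_eq_zero.mp (left_eq_add.mp this))

theorem eq_zero_of_linearCombination_eq_zero (hB : IsSemiBasis B) (h0 : (0 : M) ∉ B)
    {f : M →₀ ℝ≥0} (hf : f ∈ supported ℝ≥0 ℝ≥0 B) (hf0 : linearCombination ℝ≥0 id f = 0) :
    f = 0 := by
  by_contra hne
  obtain ⟨b, hb⟩ := support_nonempty_iff.mpr hne
  have hbB : b ∈ B := (mem_supported _ _).mp hf hb
  have hsingle : single b (1 : ℝ≥0) ∈ supported ℝ≥0 ℝ≥0 B := single_mem_supported _ _ hbB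
  have hsum : linearCombination ℝ≥0 id (single b 1) =
      linearCombination ℝ≥0 id (single b 1 + f) := by
    rw [map_add, hf0, add_zero]
  have hb0 : linearCombination ℝ≥0 id (single b (1 : ℝ≥0)) ≠ 0 := by
    rw [linearCombination_single, one_smul, id]
    exact fun h => h0 (h ▸ hbB)
  exact hne (left_eq_add.mp
    (hB.eq_of_linearCombination_eq_of_ne_zero hsingle (add_mem hsingle hf) hsum hb0))

theorem injOn_linearCombination (hB : IsSemiBasis B) (h0 : (0 : M) ∉ B) :
    Set.InjOn (linearCombination ℝ≥0 id) (supported ℝ≥0 ℝ≥0 B : Set (M →₀ ℝ≥0)) := by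
  intro f hf g hg hfg
  by_cases hz : linearCombination ℝ≥0 id f = 0
  · rw [hB.eq_zero_of_linearCombination_eq_zero h0 hf hz,
      hB.eq_zero_of_linearCombination_eq_zero h0 hg (hfg ▸ hz)]
  · exact hB.eq_of_linearCombination_eq_of_ne_zero hf hg hfg hz

end IsSemiBasis

/-- Every semi-free complete semi-vector space is regular: the cancellation law holds. -/
theorem semiFree_isRegular {M : Type*} [AddCommMonoid M] [Module ℝ≥0 M] {B : Set M}
    (hB : IsSemiBasis B) : ∀ u v w : M, u + w = v + w → u = v := by
  intro u v w huvw
  by_cases h0 : (0 : M) ∈ B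
  · have := hB.subsingleton_of_zero_mem h0
    exact Subsingleton.elim u v
  obtain ⟨fu, hfu, rfl⟩ := hB.exists_mem_supported_linearCombination_eq u
  obtain ⟨fv, hfv, rfl⟩ := hB.exists_mem_supported_linearCombination_eq v
  obtain ⟨fw, hfw, rfl⟩ := hB.exists_mem_supported_linearCombination_eq w
  rw [← map_add, ← map_add] at huvw
  rw [add_right_cancel (hB.injOn_linearCombination h0 (add_mem hfu hfw) (add_mem hfv hfw) huvw)]
end

section
/- For every real vector space V and every semi-vector space U over ℝ⁺, a sesqui-tensor product (T, t) of V and U exists, and T is linearly generated over ℝ by the image of t. Moreover it is unique up to a distinguished isomorphism: if (T, t) and (T', t') are two sesqui-tensor products of V and U, then there is a unique ℝ-linear isomorphism Φ : T → T' with Φ(t(v,u)) = t'(v,u) for all v ∈ V and u ∈ U. -/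
universe u v w w' w₁ w₂

/-- A semi-vector space structure over `ℝ⁺` on an additive commutative semigroup `U`:
a scalar multiplication `smul : ℝ → U → U` satisfying the semi-vector space axioms
for positive scalars. -/
def IsSemiVectorSMul {U : Type v} [AddCommSemigroup U] (smul : ℝ → U → U) : Prop :=
  (∀ r s : ℝ, 0 < r → 0 < s → ∀ u : U, smul (r * s) u = smul r (smul s u)) ∧
  (∀ u : U, smul 1 u = u) ∧
  (∀ r : ℝ, 0 < r → ∀ u v : U, smul r (u + v) = smul r u + smul r v) ∧
  (∀ r s : ℝ, 0 < r → 0 < s → ∀ u : U, smul (r + s) u = smul r u + smul s u)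

/-- A map `t : V × U → T` from a real vector space times a semi-vector space into a real
vector space is *sesqui-bilinear* if it is `ℝ`-linear in the first variable and
semi-linear (additive and positively homogeneous) in the second variable. -/
def IsSesquiBilinear {V : Type u} {U : Type v} {T : Type w} [AddCommGroup V] [Module ℝ V]
    [AddCommSemigroup U] (smul : ℝ → U → U) [AddCommGroup T] [Module ℝ T]
    (t : V → U → T) : Prop :=
  (∀ (v v' : V) (u : U), t (v + v') u = t v u + t v' u) ∧
  (∀ (a : ℝ) (v : V) (u : U), t (a • v) u = a • t v u) ∧
  (∀ (v : V) (u u' : U), t v (u + u') = t v u + t v u') ∧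
  (∀ r : ℝ, 0 < r → ∀ (v : V) (u : U), t v (smul r u) = r • t v u)

/-- `(T, t)` is a sesqui-tensor product of the real vector space `V` and the semi-vector
space `U` if `t` is sesqui-bilinear and every sesqui-bilinear map `f : V × U → W` into a
real vector space `W` factors through `t` via a unique `ℝ`-linear map `T → W`. -/
def IsSesquiTensorProduct {V : Type u} {U : Type v} {T : Type w} [AddCommGroup V]
    [Module ℝ V] [AddCommSemigroup U] (smul : ℝ → U → U) [AddCommGroup T] [Module ℝ T]
    (t : V → U → T) : Prop :=
  IsSesquiBilinear smul t ∧
  ∀ (W : Type w') [AddCommGroup W] [Module ℝ W] (f : V → U → W),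
    IsSesquiBilinear smul f → ∃! g : T →ₗ[ℝ] W, ∀ (v : V) (u : U), g (t v u) = f v u

/-- A bundled candidate sesqui-tensor product of `V` and `U`. -/
structure SesquiTensorCandidate (V : Type u) (U : Type v) [AddCommGroup V] [Module ℝ V]
    [AddCommSemigroup U] (smul : ℝ → U → U) where
  T : Type w
  [instAdd : AddCommGroup T]
  [instMod : Module ℝ T]
  t : V → U → T

attribute [instance] SesquiTensorCandidate.instAdd SesquiTensorCandidate.instMod

/-!
The sesqui-tensor product is built as the free real vector space on `V × U` modulo the relations
that make the generators sesqui-bilinear. For uniqueness, note first that any sesqui-tensor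
product is spanned by the image of `t`: a real functional vanishing on that image factors the
zero map, so it is zero by the uniqueness of factorizations. Hence linear maps out of a
sesqui-tensor product are determined on generators, whatever universe their target lives in,
and the two factorizations between two sesqui-tensor products are mutually inverse.
-/

theorem Submodule.span_eq_top_of_forall_dual_eq_zero {K M : Type*} [Field K] [AddCommGroup M]
    [Module K M] {s : Set M} (h : ∀ f : Module.Dual K M, (∀ x ∈ s, f x = 0) → f = 0) :
    span K s = ⊤ := by
  refine eq_top_iff.2 fun x _ => by_contra fun hx => ?_
  obtain ⟨f, hfx, hf⟩ := exists_dual_map_eq_bot_of_notMem hx inferInstance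
  refine hfx ?_
  rw [h f fun y hy => ?_, LinearMap.zero_apply]
  rw [← mem_bot K, ← hf]
  exact mem_map_of_mem (subset_span hy)

section SesquiBilinear

variable {V : Type u} {U : Type v} {T : Type w} [AddCommGroup V] [Module ℝ V]
  [AddCommSemigroup U] {smul : ℝ → U → U} [AddCommGroup T] [Module ℝ T] {t : V → U → T}

theorem IsSesquiBilinear.linearMap_comp {W : Type*} [AddCommGroup W] [Module ℝ W]
    (ht : IsSesquiBilinear smul t) (g : T →ₗ[ℝ] W) :
    IsSesquiBilinear smul fun v u => g (t v u) := by
  obtain ⟨h_add_left, h_smul_left, h_add_right, h_smul_right⟩ := ht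
  exact ⟨fun v v' u => by simp only [h_add_left, map_add],
    fun a v u => by simp only [h_smul_left, map_smul],
    fun v u u' => by simp only [h_add_right, map_add],
    fun r hr v u => by simp only [h_smul_right r hr, map_smul]⟩

namespace IsSesquiTensorProduct

/-- The universal property only speaks about targets in universe `w'`, so real functionals are
tested through `ULift.{w'} ℝ`. -/
theorem span_eq_top (ht : IsSesquiTensorProduct.{u, v, w, w'} smul t) :
    Submodule.span ℝ {x : T | ∃ v u, x = t v u} = ⊤ := by
  refine Submodule.span_eq_top_of_forall_dual_eq_zero fun φ hφ => ?_
  let lift : ℝ →ₗ[ℝ] ULift.{w'} ℝ := ULift.moduleEquiv.symm.toLinearMap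
  have hlift : lift ∘ₗ φ = 0 :=
    (ht.2 _ _ (ht.1.linearMap_comp 0)).unique (fun v u => by simp [hφ _ ⟨v, u, rfl⟩])
      fun _ _ => rfl
  ext x
  simpa [lift] using congrArg ULift.down (LinearMap.congr_fun hlift x)

theorem linearMap_ext {W : Type*} [AddCommGroup W] [Module ℝ W]
    (ht : IsSesquiTensorProduct.{u, v, w, w'} smul t) {f g : T →ₗ[ℝ] W}
    (hfg : ∀ v u, f (t v u) = g (t v u)) : f = g :=
  LinearMap.ext_on ht.span_eq_top (by rintro _ ⟨v, u, rfl⟩; exact hfg v u)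

theorem existsUnique_linearEquiv {T' : Type w'} [AddCommGroup T'] [Module ℝ T']
    {t' : V → U → T'}
    (ht : IsSesquiTensorProduct.{u, v, w, w'} smul t)
    (ht' : IsSesquiTensorProduct.{u, v, w', w} smul t') :
    ∃! Φ : T ≃ₗ[ℝ] T', ∀ v u, Φ (t v u) = t' v u := by
  obtain ⟨f, hf, -⟩ := ht.2 T' t' ht'.1
  obtain ⟨g, hg, -⟩ := ht'.2 T t ht.1
  refine ⟨LinearEquiv.ofLinearMap f g (ht'.linearMap_ext fun v u => by simp [hg, hf])
      (ht.linearMap_ext fun v u => by simp [hf, hg]), hf, fun Φ hΦ => ?_⟩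
  exact LinearEquiv.toLinearMap_injective (ht.linearMap_ext fun v u => by simp [hΦ, hf])

end IsSesquiTensorProduct

end SesquiBilinear

noncomputable section Construction

variable (V : Type u) {U : Type v} [AddCommGroup V] [Module ℝ V] [AddCommSemigroup U]
  (smul : ℝ → U → U)

def sesquiRelations : Submodule ℝ ((V × U) →₀ ℝ) :=
  let δ (v : V) (u : U) : (V × U) →₀ ℝ := Finsupp.single (v, u) 1
  Submodule.span ℝ
    {x | (∃ (v v' : V) (u : U), x = δ (v + v') u - δ v u - δ v' u) ∨
      (∃ (a : ℝ) (v : V) (u : U), x = δ (a • v) u - a • δ v u) ∨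
      (∃ (v : V) (u u' : U), x = δ v (u + u') - δ v u - δ v u') ∨
      (∃ r : ℝ, 0 < r ∧ ∃ (v : V) (u : U), x = δ v (smul r u) - r • δ v u)}

abbrev SesquiTensor : Type (max u v) := ((V × U) →₀ ℝ) ⧸ sesquiRelations V smul

namespace SesquiTensor

variable {V}

def mk (v : V) (u : U) : SesquiTensor V smul :=
  (sesquiRelations V smul).mkQ (Finsupp.single (v, u) 1)

theorem isSesquiBilinear_mk : IsSesquiBilinear smul (mk (V := V) smul) := by
  have h_rel {x} (hx : x ∈ sesquiRelations V smul) : (sesquiRelations V smul).mkQ x = 0 :=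
    (Submodule.Quotient.mk_eq_zero _).2 hx
  refine ⟨fun v v' u => ?_, fun a v u => ?_, fun v u u' => ?_, fun r hr v u => ?_⟩ <;>
    rw [← sub_eq_zero] <;> simp only [mk, ← sub_sub, ← map_smul, ← map_sub]
  · exact h_rel (Submodule.subset_span (Or.inl ⟨v, v', u, rfl⟩))
  · exact h_rel (Submodule.subset_span (Or.inr (Or.inl ⟨a, v, u, rfl⟩)))
  · exact h_rel (Submodule.subset_span (Or.inr (Or.inr (Or.inl ⟨v, u, u', rfl⟩))))
  · exact h_rel (Submodule.subset_span (Or.inr (Or.inr (Or.inr ⟨r, hr, v, u, rfl⟩))))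

variable {smul} {W : Type*} [AddCommGroup W] [Module ℝ W] {f : V → U → W}

theorem sesquiRelations_le_ker (hf : IsSesquiBilinear smul f) :
    sesquiRelations V smul ≤
      LinearMap.ker (Finsupp.linearCombination ℝ fun p => f p.1 p.2) := by
  obtain ⟨h_add_left, h_smul_left, h_add_right, h_smul_right⟩ := hf
  rw [sesquiRelations, Submodule.span_le]
  rintro x (⟨v, v', u, rfl⟩ | ⟨a, v, u, rfl⟩ | ⟨v, u, u', rfl⟩ | ⟨r, hr, v, u, rfl⟩) <;>
    simp only [SetLike.mem_coe, LinearMap.mem_ker, map_sub, map_smul,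
      Finsupp.linearCombination_single, one_smul]
  · rw [h_add_left]; abel
  · rw [h_smul_left, sub_self]
  · rw [h_add_right]; abel
  · rw [h_smul_right r hr, sub_self]

def lift (hf : IsSesquiBilinear smul f) : SesquiTensor V smul →ₗ[ℝ] W :=
  (sesquiRelations V smul).liftQ _ (sesquiRelations_le_ker hf)

@[simp]
theorem lift_mk (hf : IsSesquiBilinear smul f) (v : V) (u : U) :
    lift hf (mk smul v u) = f v u := by
  simp [lift, mk, Finsupp.linearCombination_single]

theorem linearMap_ext {g g' : SesquiTensor V smul →ₗ[ℝ] W}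
    (h : ∀ v u, g (mk smul v u) = g' (mk smul v u)) : g = g' :=
  Submodule.linearMap_qext _ <| Finsupp.lhom_ext' fun p => LinearMap.ext_ring (h p.1 p.2)

theorem isSesquiTensorProduct_mk :
    IsSesquiTensorProduct.{u, v, max u v, w'} smul (mk (V := V) smul) :=
  ⟨isSesquiBilinear_mk smul, fun _ _ _ _ hf =>
    ⟨lift hf, lift_mk hf, fun _ hg => linearMap_ext fun v u => by rw [hg, lift_mk]⟩⟩

end SesquiTensor

end Construction

theorem sesquiTensorProduct_exists_unique_general {V : Type u} {U : Type v} [AddCommGroup V]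
    [Module ℝ V] [AddCommSemigroup U] (smul : ℝ → U → U) :
    (∃ P : SesquiTensorCandidate.{u, v, max u v} V U smul,
        IsSesquiTensorProduct.{u, v, max u v, w'} smul P.t ∧
        Submodule.span ℝ {x : P.T | ∃ (v : V) (u : U), x = P.t v u} = ⊤) ∧
    (∀ (P : SesquiTensorCandidate.{u, v, w₁} V U smul)
        (Q : SesquiTensorCandidate.{u, v, w₂} V U smul),
        IsSesquiTensorProduct.{u, v, w₁, w₂} smul P.t →
        IsSesquiTensorProduct.{u, v, w₂, w₁} smul Q.t →
        ∃! Φ : P.T ≃ₗ[ℝ] Q.T, ∀ (v : V) (u : U), Φ (P.t v u) = Q.t v u) :=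
  ⟨⟨⟨SesquiTensor V smul, SesquiTensor.mk smul⟩, SesquiTensor.isSesquiTensorProduct_mk,
      (SesquiTensor.isSesquiTensorProduct_mk.{u, v, 0}).span_eq_top⟩,
    fun _ _ hP hQ => hP.existsUnique_linearEquiv hQ⟩

/-- Existence and uniqueness of the sesqui-tensor product of a real vector space `V`
and a semi-vector space `U` over `ℝ⁺`: a sesqui-tensor product exists and is linearly
generated by the image of the canonical map, and any two sesqui-tensor products are
related by a unique `ℝ`-linear isomorphism compatible with the canonical maps. -/
theorem sesquiTensorProduct_exists_unique {V : Type u} {U : Type v} [AddCommGroup V]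
    [Module ℝ V] [AddCommSemigroup U] (smul : ℝ → U → U)
    (hU : IsSemiVectorSMul smul) :
    (∃ P : SesquiTensorCandidate.{u, v, max u v} V U smul,
        IsSesquiTensorProduct.{u, v, max u v, w'} smul P.t ∧
        Submodule.span ℝ {x : P.T | ∃ (v : V) (u : U), x = P.t v u} = ⊤) ∧
    (∀ (P : SesquiTensorCandidate.{u, v, w₁} V U smul)
        (Q : SesquiTensorCandidate.{u, v, w₂} V U smul),
        IsSesquiTensorProduct.{u, v, w₁, w₂} smul P.t →
        IsSesquiTensorProduct.{u, v, w₂, w₁} smul Q.t →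
        ∃! Φ : P.T ≃ₗ[ℝ] Q.T, ∀ (v : V) (u : U), Φ (P.t v u) = Q.t v u) :=
  sesquiTensorProduct_exists_unique_general smul
end

section
/- Let B be a type and let ι : (B →₀ ℝ≥0) → (B →₀ ℝ) be the canonical embedding of finitely supported ℝ≥0-valued functions into finitely supported real-valued functions, induced by the coercion ℝ≥0 → ℝ. Then for every real vector space W and every map f : (B →₀ ℝ≥0) → W that is additive (f(x + y) = f(x) + f(y)) and satisfies f(r • x) = r • f(x) for all real r > 0, there exists a unique ℝ-linear map f̄ : (B →₀ ℝ) → W with f̄(ι(x)) = f(x) for all x. -/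
open scoped NNReal

/-! An additive map on `B →₀ ℝ≥0` that is homogeneous for positive scalars is `ℝ≥0`-linear, so it
is determined by its values on the vectors `single b 1`. These vectors also form a basis of
`B →₀ ℝ`, and the linear combination of those values is the unique `ℝ`-linear extension. -/

section PositivelyHomogeneous

variable {M W : Type*} [AddCommMonoid M] [Module ℝ≥0 M] [AddCommGroup W] [Module ℝ W]

/-- Homogeneity at the scalar `0` holds because additivity forces `f 0 = 0`. -/
def LinearMap.ofPosHomogeneous (f : M → W) (hadd : ∀ x y, f (x + y) = f x + f y)
    (hsmul : ∀ r : ℝ, 0 < r → ∀ x, f (r.toNNReal • x) = r • f x) : M →ₗ[ℝ≥0] W where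
  toFun := f
  map_add' := hadd
  map_smul' c x := by
    rcases eq_zero_or_pos c with rfl | hc
    · simpa using (hadd 0 0).symm
    · simpa [NNReal.smul_def] using hsmul c hc x

end PositivelyHomogeneous

namespace Finsupp

variable {B W : Type*} [AddCommGroup W] [Module ℝ W]

theorem mapRange_toReal_single (b : B) (c : ℝ≥0) :
    mapRange NNReal.toReal NNReal.coe_zero (single b c) = single b (c : ℝ) :=
  mapRange_single

theorem linearCombination_mapRange_toReal (F : (B →₀ ℝ≥0) →ₗ[ℝ≥0] W) (x : B →₀ ℝ≥0) :
    linearCombination ℝ (fun b => F (single b 1)) (mapRange NNReal.toReal NNReal.coe_zero x) =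
      F x := by
  induction x using Finsupp.induction_linear with
  | zero => simp
  | add x y hx hy => rw [mapRange_add NNReal.coe_add, map_add, map_add, hx, hy]
  | single b c =>
    rw [mapRange_toReal_single, linearCombination_single, ← NNReal.smul_def, ← map_smul,
      smul_single_one]

theorem real_linearMap_ext {g g' : (B →₀ ℝ) →ₗ[ℝ] W}
    (h : ∀ x : B →₀ ℝ≥0, g (mapRange NNReal.toReal NNReal.coe_zero x) =
      g' (mapRange NNReal.toReal NNReal.coe_zero x)) : g = g' :=
  lhom_ext' fun b => LinearMap.ext_ring <| by
    simpa only [mapRange_toReal_single, NNReal.coe_one, LinearMap.comp_apply, lsingle_apply] using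
      h (single b 1)

theorem existsUnique_real_extension (F : (B →₀ ℝ≥0) →ₗ[ℝ≥0] W) :
    ∃! g : (B →₀ ℝ) →ₗ[ℝ] W, ∀ x : B →₀ ℝ≥0, g (mapRange NNReal.toReal NNReal.coe_zero x) = F x :=
  ⟨linearCombination ℝ (fun b => F (single b 1)), linearCombination_mapRange_toReal F,
    fun _ hg => real_linearMap_ext fun x => by rw [hg, linearCombination_mapRange_toReal]⟩

end Finsupp

/-- Universal vector extension of the semi-free complete semi-vector space `B →₀ ℝ≥0`:
every semi-linear map `f` from `B →₀ ℝ≥0` into a real vector space `W` factors uniquely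
through the canonical embedding `ι : (B →₀ ℝ≥0) → (B →₀ ℝ)` (induced by the coercion
`ℝ≥0 → ℝ`) via an `ℝ`-linear map `(B →₀ ℝ) → W`. -/
theorem finsupp_universal_vector_extension {B W : Type*} [AddCommGroup W] [Module ℝ W]
    (f : (B →₀ ℝ≥0) → W)
    (hadd : ∀ x y : B →₀ ℝ≥0, f (x + y) = f x + f y)
    (hsmul : ∀ r : ℝ, 0 < r → ∀ x : B →₀ ℝ≥0, f (r.toNNReal • x) = r • f x) :
    ∃! g : (B →₀ ℝ) →ₗ[ℝ] W,
      ∀ x : B →₀ ℝ≥0, g (Finsupp.mapRange NNReal.toReal NNReal.coe_zero x) = f x :=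
  Finsupp.existsUnique_real_extension (LinearMap.ofPosHomogeneous f hadd hsmul)
end

section
/- Let U and V be positive spaces and q ∈ ℚ. (i) For every q-rational map f : U → V and every s ∈ ℝ>0, the map u ↦ s • f(u) is again q-rational. (ii) For any two q-rational maps f, g : U → V there is a unique s ∈ ℝ>0 with g(u) = s • f(u) for all u ∈ U. Hence the set Rat^q(U, V) of q-rational maps, equipped with the pointwise ℝ>0-action, is itself a positive space (the action is free and transitive). -/
/-!
Fix a base point `u₀ ∈ U` and write every `u` as `ρ(u) • u₀`, where `ρ(u) > 0` is unique; then
`ρ(r • u) = r ρ(u)`. Thus `u ↦ ρ(u)^q • v₀` is `q`-rational, and a `q`-rational map is determined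
by its value at `u₀`. Since `ℝ>0` is commutative, scaling a `q`-rational map pointwise keeps it
`q`-rational, and two `q`-rational maps `f, g` differ by the unique `s` with `g u₀ = s • f u₀`.
-/

/-- A positive space: a nonempty type `U` with a free and transitive multiplicative
action of the positive reals, encoded by `act : ℝ → U → U` (only the values of `act`
at positive scalars are relevant). -/
def IsPositiveSpace {U : Type*} (act : ℝ → U → U) : Prop :=
  Nonempty U ∧
  (∀ u : U, act 1 u = u) ∧
  (∀ r s : ℝ, 0 < r → 0 < s → ∀ u : U, act r (act s u) = act (r * s) u) ∧
  (∀ u u' : U, ∃! r : ℝ, 0 < r ∧ act r u = u')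

/-- A map `f` between positive spaces is `q`-rational if `f (r • u) = r ^ q • f u`
for all positive reals `r`, where `r ^ q` is the real rational power. -/
def IsRatMap {U V : Type*} (act : ℝ → U → U) (act' : ℝ → V → V) (q : ℚ) (f : U → V) :
    Prop :=
  ∀ r : ℝ, 0 < r → ∀ u : U, f (act r u) = act' (r ^ (q : ℝ)) (f u)

namespace IsPositiveSpace

variable {U : Type*} {act : ℝ → U → U}

noncomputable def ratio (hU : IsPositiveSpace act) (u u' : U) : ℝ :=
  (hU.2.2.2 u u').exists.choose

theorem ratio_pos (hU : IsPositiveSpace act) (u u' : U) : 0 < hU.ratio u u' :=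
  (hU.2.2.2 u u').exists.choose_spec.1

theorem act_ratio (hU : IsPositiveSpace act) (u u' : U) : act (hU.ratio u u') u = u' :=
  (hU.2.2.2 u u').exists.choose_spec.2

theorem ratio_act (hU : IsPositiveSpace act) {r : ℝ} (hr : 0 < r) (u u' : U) :
    hU.ratio u (act r u') = r * hU.ratio u u' := by
  refine (hU.2.2.2 u (act r u')).unique ⟨hU.ratio_pos _ _, hU.act_ratio _ _⟩
    ⟨mul_pos hr (hU.ratio_pos u u'), ?_⟩
  rw [← hU.2.2.1 r _ hr (hU.ratio_pos u u'), hU.act_ratio]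

end IsPositiveSpace

section RatMap

variable {U V : Type*} {actU : ℝ → U → U} {actV : ℝ → V → V} {q : ℚ}

theorem act_act_comm
    (hmul : ∀ r s : ℝ, 0 < r → 0 < s → ∀ v : V, actV r (actV s v) = actV (r * s) v)
    {r s : ℝ} (hr : 0 < r) (hs : 0 < s) (v : V) : actV r (actV s v) = actV s (actV r v) := by
  rw [hmul r s hr hs, hmul s r hs hr, mul_comm]

theorem IsRatMap.act
    (hmul : ∀ r s : ℝ, 0 < r → 0 < s → ∀ v : V, actV r (actV s v) = actV (r * s) v)
    {f : U → V} (hf : IsRatMap actU actV q f) {s : ℝ} (hs : 0 < s) :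
    IsRatMap actU actV q fun u => actV s (f u) := fun r hr u => by
  simp only [hf r hr u, act_act_comm hmul hs (Real.rpow_pos_of_pos hr _)]

theorem isRatMap_rpow_ratio (hU : IsPositiveSpace actU)
    (hmul : ∀ r s : ℝ, 0 < r → 0 < s → ∀ v : V, actV r (actV s v) = actV (r * s) v)
    (u₀ : U) (v₀ : V) (q : ℚ) :
    IsRatMap actU actV q fun u => actV (hU.ratio u₀ u ^ (q : ℝ)) v₀ := fun r hr u => by
  simp only [hU.ratio_act hr, Real.mul_rpow hr.le (hU.ratio_pos u₀ u).le,
    hmul _ _ (Real.rpow_pos_of_pos hr _) (Real.rpow_pos_of_pos (hU.ratio_pos u₀ u) _)]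

theorem IsRatMap.eq_act_of_eq_act
    (hmul : ∀ r s : ℝ, 0 < r → 0 < s → ∀ v : V, actV r (actV s v) = actV (r * s) v)
    {u₀ : U} (horbit : ∀ u, ∃ r, 0 < r ∧ actU r u₀ = u)
    {f g : U → V} (hf : IsRatMap actU actV q f) (hg : IsRatMap actU actV q g)
    {s : ℝ} (hs : 0 < s) (h₀ : g u₀ = actV s (f u₀)) (u : U) : g u = actV s (f u) := by
  obtain ⟨r, hr, rfl⟩ := horbit u
  rw [hf r hr, hg r hr, h₀, act_act_comm hmul (Real.rpow_pos_of_pos hr _) hs]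

end RatMap

/-- The set of `q`-rational maps between two positive spaces, with the pointwise action
of the positive reals, is itself a positive space: it is nonempty, stable under the
pointwise action, and the action on it is free and transitive. -/
theorem ratMaps_positiveSpace {U V : Type*} (actU : ℝ → U → U) (actV : ℝ → V → V)
    (hU : IsPositiveSpace actU) (hV : IsPositiveSpace actV) (q : ℚ) :
    (∃ f : U → V, IsRatMap actU actV q f) ∧
    (∀ f : U → V, IsRatMap actU actV q f → ∀ s : ℝ, 0 < s →
      IsRatMap actU actV q fun u => actV s (f u)) ∧
    (∀ f g : U → V, IsRatMap actU actV q f → IsRatMap actU actV q g →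
      ∃! s : ℝ, 0 < s ∧ ∀ u : U, g u = actV s (f u)) := by
  obtain ⟨u₀⟩ := hU.1
  obtain ⟨⟨v₀⟩, -, hmulV, htransV⟩ := hV
  refine ⟨⟨_, isRatMap_rpow_ratio hU hmulV u₀ v₀ q⟩, fun f hf s hs => hf.act hmulV hs, ?_⟩
  intro f g hf hg
  obtain ⟨s, ⟨hs, hs₀⟩, hs_unique⟩ := htransV (f u₀) (g u₀)
  refine ⟨s, ⟨hs, hf.eq_act_of_eq_act hmulV ?_ hg hs hs₀.symm⟩,
    fun t ⟨ht, hgt⟩ => hs_unique t ⟨ht, (hgt u₀).symm⟩⟩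
  exact fun u => ⟨hU.ratio u₀ u, hU.ratio_pos u₀ u, hU.act_ratio u₀ u⟩
end

section
/- Let U be a positive space and let U⋆ denote the set of 1-rational maps ω : U → ℝ>0, where ℝ>0 is regarded as a positive space under its own multiplication; U⋆ is a positive space under the pointwise action (s • ω)(u) = s·ω(u). Let p, q ∈ ℚ. Then every (p+q)-rational map h : U⋆ → ℝ>0 factors as a pointwise product h = f·g with f p-rational and g q-rational, and the factorization is unique up to reciprocal scaling: if also h = f'·g' with f' p-rational and g' q-rational, then there is s ∈ ℝ>0 with f' = s·f and g' = s⁻¹·g. (This realizes the canonical semi-linear isomorphism U^p ⊗̂ U^q ≅ U^{p+q} of rational powers of a positive space.) -/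
/-- An element of the semi-dual `U⋆` of a positive space `U`: a `1`-rational map
`ω : U → ℝ>0`, encoded as a real-valued map which is positive and `1`-rational. -/
def IsDual {U : Type*} (actU : ℝ → U → U) (ω : U → ℝ) : Prop :=
  (∀ u : U, 0 < ω u) ∧ ∀ r : ℝ, 0 < r → ∀ u : U, ω (actU r u) = r * ω u

/-- An element of the rational power `U^q = Rat^q (U⋆, ℝ>0)`: a map `h` on the
semi-dual `U⋆`, positive and `q`-rational with respect to the pointwise action of the
positive reals on `U⋆`. -/
def IsPow {U : Type*} (actU : ℝ → U → U) (q : ℚ) (h : (U → ℝ) → ℝ) : Prop :=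
  (∀ ω : U → ℝ, IsDual actU ω → 0 < h ω) ∧
  ∀ s : ℝ, 0 < s → ∀ ω : U → ℝ, IsDual actU ω →
    h (fun u => s * ω u) = s ^ (q : ℝ) * h ω


/-
Fixing a base point `u₀ : U`, the semi-dual `U⋆` is a single orbit: every `ω ∈ U⋆` is the
multiple `ω u₀ • ω₀` of the coordinate functional `ω₀ u := the r with r • u₀ = u`. Hence a
`p`-rational map on `U⋆` is determined by its value at `ω₀`, so any two of them are proportional;
this gives uniqueness. For existence take `f ω := (ω u₀) ^ p` and `g := h / f`.
-/

section RationalPowers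

variable {U : Type*} {actU : ℝ → U → U}

theorem IsPositiveSpace.exists_isDual_forall_eq_mul (hU : IsPositiveSpace actU) :
    ∃ ω₀ : U → ℝ, IsDual actU ω₀ ∧
      ∀ ω : U → ℝ, IsDual actU ω → ∃ t : ℝ, 0 < t ∧ ω = fun u => t * ω₀ u := by
  obtain ⟨⟨u₀⟩, -, hmul, htrans⟩ := hU
  choose ω₀ hω₀ hω₀_unique using htrans u₀
  have hω₀_pos : ∀ u, 0 < ω₀ u := fun u => (hω₀ u).1
  have hω₀_act : ∀ u, actU (ω₀ u) u₀ = u := fun u => (hω₀ u).2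
  refine ⟨ω₀, ⟨hω₀_pos, fun r hr u => ?_⟩, fun ω hω => ⟨ω u₀, hω.1 u₀, funext fun u => ?_⟩⟩
  · refine (hω₀_unique _ _ ⟨mul_pos hr (hω₀_pos u), ?_⟩).symm
    rw [← hmul r (ω₀ u) hr (hω₀_pos u) u₀, hω₀_act u]
  · conv_lhs => rw [← hω₀_act u]
    rw [hω.2 _ (hω₀_pos u) u₀, mul_comm]

theorem IsPow.pos {p : ℚ} {f : (U → ℝ) → ℝ} (hf : IsPow actU p f) {ω : U → ℝ}
    (hω : IsDual actU ω) : 0 < f ω :=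
  hf.1 ω hω

theorem IsPositiveSpace.exists_pos_eq_mul_of_isPow (hU : IsPositiveSpace actU) {p : ℚ}
    {f f' : (U → ℝ) → ℝ} (hf : IsPow actU p f) (hf' : IsPow actU p f') :
    ∃ s : ℝ, 0 < s ∧ ∀ ω : U → ℝ, IsDual actU ω → f' ω = s * f ω := by
  obtain ⟨ω₀, hω₀, horbit⟩ := hU.exists_isDual_forall_eq_mul
  refine ⟨f' ω₀ / f ω₀, div_pos (hf'.pos hω₀) (hf.pos hω₀), fun ω hω => ?_⟩
  obtain ⟨t, ht, rfl⟩ := horbit ω hω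
  rw [hf'.2 t ht ω₀ hω₀, hf.2 t ht ω₀ hω₀]
  field_simp [(hf.pos hω₀).ne']

theorem isPow_rpow_apply (u₀ : U) (p : ℚ) : IsPow actU p fun ω => ω u₀ ^ (p : ℝ) :=
  ⟨fun _ hω => Real.rpow_pos_of_pos (hω.1 u₀) _,
    fun _ hs _ hω => Real.mul_rpow hs.le (hω.1 u₀).le⟩

theorem IsPow.div {p q : ℚ} {h f : (U → ℝ) → ℝ} (hh : IsPow actU (p + q) h)
    (hf : IsPow actU p f) : IsPow actU q fun ω => h ω / f ω := by
  refine ⟨fun _ hω => div_pos (hh.pos hω) (hf.pos hω), fun s hs ω hω => ?_⟩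
  have hsplit : s ^ ((p + q : ℚ) : ℝ) = s ^ (p : ℝ) * s ^ (q : ℝ) := by
    rw [← Real.rpow_add hs]
    push_cast
    rfl
  simp only [hh.2 s hs ω hω, hf.2 s hs ω hω, hsplit]
  field_simp [(hf.pos hω).ne']

end RationalPowers

/-- The canonical isomorphism `U^p ⊗̂ U^q ≅ U^(p+q)` for a positive space `U`: every
`(p+q)`-rational map `h` on the semi-dual `U⋆` factors as a pointwise product of a
`p`-rational and a `q`-rational map, uniquely up to a reciprocal positive rescaling of
the two factors. -/
theorem pow_add_factorization {U : Type*} (actU : ℝ → U → U)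
    (hU : IsPositiveSpace actU) (p q : ℚ) (h : (U → ℝ) → ℝ)
    (hh : IsPow actU (p + q) h) :
    (∃ f g : (U → ℝ) → ℝ, IsPow actU p f ∧ IsPow actU q g ∧
      ∀ ω : U → ℝ, IsDual actU ω → h ω = f ω * g ω) ∧
    (∀ f g f' g' : (U → ℝ) → ℝ,
      IsPow actU p f → IsPow actU q g → IsPow actU p f' → IsPow actU q g' →
      (∀ ω : U → ℝ, IsDual actU ω → h ω = f ω * g ω) →
      (∀ ω : U → ℝ, IsDual actU ω → h ω = f' ω * g' ω) →
      ∃ s : ℝ, 0 < s ∧ (∀ ω : U → ℝ, IsDual actU ω → f' ω = s * f ω) ∧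
        ∀ ω : U → ℝ, IsDual actU ω → g' ω = s⁻¹ * g ω) := by
  obtain ⟨u₀⟩ := hU.1
  have hf₀ : IsPow actU p fun ω => ω u₀ ^ (p : ℝ) := isPow_rpow_apply u₀ p
  refine ⟨⟨_, _, hf₀, hh.div hf₀, fun ω hω => (mul_div_cancel₀ _ (hf₀.pos hω).ne').symm⟩, ?_⟩
  intro f g f' g' hf _ hf' _ hfg hfg'
  obtain ⟨s, hs, hf's⟩ := hU.exists_pos_eq_mul_of_isPow hf hf'
  refine ⟨s, hs, hf's, fun ω hω => ?_⟩
  have hcancel : f ω * (s * g' ω) = f ω * g ω := by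
    rw [← hfg ω hω, hfg' ω hω, hf's ω hω]
    ring
  rw [← mul_left_cancel₀ (hf.pos hω).ne' hcancel, inv_mul_cancel_left₀ hs.ne']
end
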